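/- Consider f(x,y) = x² + y² + x + y and g(x,y) = x² + y² on ℝ², with K = {(x,y) : g(x,y) ≤ 0} = {(0,0)} and f* = 0. For any c > 0, there do not exist sum-of-squares polynomials σ, σ₀, σ₁ ∈ ℝ[x,y] with f = σ₀ − σ₁·g + σ·(c − f). -/
import Mathlib


/-- A multivariate polynomial is a sum of squares. -/
def IsSOS (p : MvPolynomial (Fin 2) ℝ) : Prop :=
  ∃ (k : ℕ) (q : Fin k → MvPolynomial (Fin 2) ℝ), p = ∑ j, (q j) ^ 2

lemma IsSOS.eval_nonneg {p : MvPolynomial (Fin 2) ℝ} (hp : IsSOS p)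
    (x : Fin 2 → ℝ) : 0 ≤ MvPolynomial.eval x p := by
  obtain ⟨k, q, rfl⟩ := hp
  rw [map_sum]
  exact Finset.sum_nonneg fun j _ => by rw [map_pow]; positivity

/-- For `f = x² + y² + x + y` and `g = x² + y²`, there is no SOS representation
`f = σ₀ − σ₁ g + σ (c − f)` for any `c > 0`. -/
theorem no_sos_representation_counterexample
    (f g : MvPolynomial (Fin 2) ℝ)
    (hfdef : f = MvPolynomial.X 0 ^ 2 + MvPolynomial.X 1 ^ 2
      + MvPolynomial.X 0 + MvPolynomial.X 1)
    (hgdef : g = MvPolynomial.X 0 ^ 2 + MvPolynomial.X 1 ^ 2) :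
    ∀ c : ℝ, 0 < c →
      ¬ ∃ σ σ₀ σ₁ : MvPolynomial (Fin 2) ℝ, IsSOS σ ∧ IsSOS σ₀ ∧ IsSOS σ₁ ∧
        f = σ₀ - σ₁ * g + σ * (MvPolynomial.C c - f) := by
  intro c hc ⟨σ, σ₀, σ₁, hσ, hσ₀, hσ₁, heq⟩
  -- F t = σ₁ evaluated at (t,t)
  set F : ℝ → ℝ := fun t => MvPolynomial.eval ![t, t] σ₁ with hF
  have hpi : Continuous fun t : ℝ => (![t, t] : Fin 2 → ℝ) := by
    apply continuous_pi; intro i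
    fin_cases i <;>
      simp only [Matrix.cons_val_zero, Matrix.cons_val_one, Matrix.head_cons] <;>
      exact continuous_id
  have hFcont : Continuous F := (MvPolynomial.continuous_eval (p := σ₁)).comp hpi
  set M : ℝ := F 0 + 1 with hM
  have hF0 : 0 ≤ F 0 := hσ₁.eval_nonneg _
  have hM1 : 1 ≤ M := by linarith
  -- choose δ from continuity at 0
  have := Metric.continuous_iff.mp hFcont 0 1 one_pos
  obtain ⟨δ, hδ, hball⟩ := this
  set t : ℝ := -min δ (1 / (2 * M)) / 2 with ht
  have hmpos : 0 < min δ (1 / (2 * M)) := lt_min hδ (by positivity)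
  have htneg : t < 0 := by rw [ht]; linarith
  have htδ : dist t 0 < δ := by
    rw [Real.dist_eq, sub_zero, abs_of_neg htneg, ht]
    have : min δ (1 / (2 * M)) ≤ δ := min_le_left _ _
    linarith
  have hFt : F t < M := by
    have := hball t htδ
    rw [Real.dist_eq] at this
    have := abs_lt.mp this
    rw [hM]; linarith [this.2]
  have hFt0 : 0 ≤ F t := hσ₁.eval_nonneg _
  have htM : -1/2 < t * M := by
    have h1 : min δ (1 / (2 * M)) ≤ 1 / (2 * M) := min_le_right _ _
    have h2 : -t ≤ 1 / (2 * M) / 2 := by rw [ht]; linarith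
    have h3 : (-t) * M ≤ 1 / (2 * M) / 2 * M := by
      apply mul_le_mul_of_nonneg_right h2 (by linarith)
    have h4 : 1 / (2 * M) / 2 * M = 1 / 4 := by
      field_simp; ring
    nlinarith
  have ht1 : -1/4 ≤ t := by
    have h1 : min δ (1 / (2 * M)) ≤ 1 / (2 * M) := min_le_right _ _
    have h2 : 1 / (2 * M) ≤ 1 / 2 := by
      apply div_le_div_of_nonneg_left one_pos.le (by linarith) (by linarith)
    rw [ht]; linarith
  -- evaluate the identity at (t,t)
  have heval := congrArg (MvPolynomial.eval ![t, t]) heq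
  simp only [hfdef, hgdef, map_add, map_sub, map_mul, map_pow,
    MvPolynomial.eval_X, MvPolynomial.eval_C] at heval
  have hv0 : (![t, t] : Fin 2 → ℝ) 0 = t := rfl
  have hv1 : (![t, t] : Fin 2 → ℝ) 1 = t := rfl
  rw [hv0, hv1] at heval
  have hA : 0 ≤ MvPolynomial.eval ![t, t] σ₀ := hσ₀.eval_nonneg _
  have hS : 0 ≤ MvPolynomial.eval ![t, t] σ := hσ.eval_nonneg _
  have hcf : 0 ≤ c - (t ^ 2 + t ^ 2 + t + t) := by nlinarith
  have hB : MvPolynomial.eval ![t, t] σ₁ = F t := rfl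
  nlinarith [mul_nonneg hS hcf, sq_nonneg t,
    mul_le_mul_of_nonneg_left (le_of_lt hFt) (sq_nonneg t)]
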